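/- Let J, R, Q be real n×n matrices with Jᵀ = −J, R positive semidefinite, and Q positive semidefinite, and let M denote the matrix (J − R)Q viewed as a complex n×n matrix. For λ ∈ ℂ with Re(λ) = 0ance and x ∈ ℂⁿ with x ≠ 0, the pair (λ, x) is an eigenpair of M (i.e., Mx = λx) if and only if (RQ)x = 0 and (JQ)x = λx (where RQ and JQ are viewed as complex matrices). -/

import Mathlib

open Matrix ComplexOrder

/-- The complexification of a real matrix. -/
noncomputable def toC {n : ℕ} (A : Matrix (Fin n) (Fin n) ℝ) : Matrix (Fin n) (Fin n) ℂ :=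
  A.map (fun a => (a : ℂ))

/-!
Test the eigen-equation against `y = Q x`. The product `y* x = x* Q x` is real and `μ` is
imaginary, and `y* J y` is imaginary because `J` is skew, so taking real parts leaves
`y* R y = 0`; semidefiniteness of `R` then forces `R y = 0`, i.e. `R Q x = 0`.
-/

namespace Matrix

variable {𝕜 ι : Type*} [RCLike 𝕜] [Fintype ι]

lemma re_star_dotProduct_mulVec_self_of_conjTranspose_eq_neg {A : Matrix ι ι 𝕜}
    (hA : Aᴴ = -A) (y : ι → 𝕜) : RCLike.re (star y ⬝ᵥ A *ᵥ y) = 0 := by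
  have hconj : star (star y ⬝ᵥ A *ᵥ y) = -(star y ⬝ᵥ A *ᵥ y) := by
    rw [← star_dotProduct_star, star_star, star_mulVec, ← dotProduct_mulVec, hA, neg_mulVec,
      dotProduct_neg]
  have := congrArg RCLike.re hconj
  rw [RCLike.star_def, RCLike.conj_re, map_neg] at this
  linarith

theorem mulVec_eq_zero_of_sub_mul_mulVec_eq_smul {A R Q : Matrix ι ι 𝕜} (hA : Aᴴ = -A)
    (hR : R.PosSemidef) (hQ : Q.IsHermitian) {μ : 𝕜} (hμ : RCLike.re μ = 0) {x : ι → 𝕜}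
    (h : ((A - R) * Q) *ᵥ x = μ • x) : (R * Q) *ᵥ x = 0 := by
  set y := Q *ᵥ x
  have hyx : star y ⬝ᵥ x = star x ⬝ᵥ Q *ᵥ x := by
    rw [star_mulVec, hQ.eq, dotProduct_mulVec]
  have hform : star y ⬝ᵥ A *ᵥ y - star y ⬝ᵥ R *ᵥ y = μ * (star y ⬝ᵥ x) := by
    rw [← dotProduct_sub, ← sub_mulVec, mulVec_mulVec, h, dotProduct_smul, smul_eq_mul]
  have hre : RCLike.re (star y ⬝ᵥ R *ᵥ y) = 0 := by
    have := congrArg RCLike.re hform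
    rw [map_sub, re_star_dotProduct_mulVec_self_of_conjTranspose_eq_neg hA, RCLike.mul_re, hμ,
      hyx, hQ.im_star_dotProduct_mulVec_self] at this
    linarith
  have hzero : star y ⬝ᵥ R *ᵥ y = 0 := by
    obtain ⟨-, him⟩ := RCLike.nonneg_iff.mp (hR.dotProduct_mulVec_nonneg y)
    exact RCLike.ext (by simpa using hre) (by simpa using him)
  rw [← mulVec_mulVec, (hR.dotProduct_mulVec_zero_iff y).mp hzero]

theorem sub_mul_mulVec_eq_smul_iff {A R Q : Matrix ι ι 𝕜} (hA : Aᴴ = -A)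
    (hR : R.PosSemidef) (hQ : Q.IsHermitian) {μ : 𝕜} (hμ : RCLike.re μ = 0) {x : ι → 𝕜} :
    ((A - R) * Q) *ᵥ x = μ • x ↔ (R * Q) *ᵥ x = 0 ∧ (A * Q) *ᵥ x = μ • x := by
  have hsplit : ((A - R) * Q) *ᵥ x = (A * Q) *ᵥ x - (R * Q) *ᵥ x := by rw [sub_mul, sub_mulVec]
  refine ⟨fun h ↦ ?_, fun ⟨hRQ, hAQ⟩ ↦ by rw [hsplit, hRQ, hAQ, sub_zero]⟩
  have hRQ := mulVec_eq_zero_of_sub_mul_mulVec_eq_smul hA hR hQ hμ h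
  exact ⟨hRQ, by rwa [hsplit, hRQ, sub_zero] at h⟩

end Matrix

section Complexification

variable {n : ℕ}

lemma toC_mul (A B : Matrix (Fin n) (Fin n) ℝ) : toC (A * B) = toC A * toC B :=
  Matrix.map_mul (f := Complex.ofRealHom)

lemma toC_sub (A B : Matrix (Fin n) (Fin n) ℝ) : toC (A - B) = toC A - toC B :=
  Matrix.map_sub _ Complex.ofReal_sub A B

lemma conjTranspose_toC (A : Matrix (Fin n) (Fin n) ℝ) : (toC A)ᴴ = toC Aᵀ := by
  rw [toC, ← conjTranspose_map _ fun _ ↦ (Complex.conj_ofReal _).symm,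
    conjTranspose_eq_transpose_of_trivial, toC]

open scoped MatrixOrder in
lemma Matrix.PosSemidef.toC {A : Matrix (Fin n) (Fin n) ℝ} (hA : A.PosSemidef) :
    (toC A).PosSemidef := by
  obtain ⟨B, rfl⟩ := CStarAlgebra.nonneg_iff_eq_star_mul_self.mp hA.nonneg
  rw [toC_mul, star_eq_conjTranspose, conjTranspose_eq_transpose_of_trivial, ← conjTranspose_toC]
  exact posSemidef_conjTranspose_mul_self _

end Complexification

theorem imaginary_eigenpair_iff_general {n : ℕ} (J R Q : Matrix (Fin n) (Fin n) ℝ)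
    (hJ : Jᵀ = -J) (hR : R.PosSemidef) (hQ : Q.PosSemidef)
    (μ : ℂ) (hμ : μ.re = 0) (x : Fin n → ℂ) :
    toC ((J - R) * Q) *ᵥ x = μ • x ↔
      (toC (R * Q) *ᵥ x = 0 ∧ toC (J * Q) *ᵥ x = μ • x) := by
  have hJC : (toC J)ᴴ = -toC J := by
    rw [conjTranspose_toC, hJ, toC, Matrix.map_neg _ Complex.ofReal_neg, toC]
  rw [toC_mul, toC_mul, toC_mul, toC_sub]
  exact sub_mul_mulVec_eq_smul_iff hJC hR.toC hQ.toC.isHermitian hμ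

theorem imaginary_eigenpair_iff {n : ℕ} (J R Q : Matrix (Fin n) (Fin n) ℝ)
    (hJ : Jᵀ = -J) (hR : R.PosSemidef) (hQ : Q.PosSemidef)
    (μ : ℂ) (hμ : μ.re = 0) (x : Fin n → ℂ) (hx : x ≠ 0) :
    toC ((J - R) * Q) *ᵥ x = μ • x ↔
      (toC (R * Q) *ᵥ x = 0 ∧ toC (J * Q) *ᵥ x = μ • x) :=
  imaginary_eigenpair_iff_general J R Q hJ hR hQ μ hμ x
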